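/- Let n, l, m, k be natural numbers, δ > 0, and ε, ε' ∈ (0,1). Suppose Scond : {0,1}^n → ({0,1}^l)² is a function such that for every (n,(1/2−δ)n)-source Y, the distribution Scond(Y) is ε'-close to a convex combination of distributions on ({0,1}^l)² in each of which at least one of the two coordinates has min-entropy at least (1/2+δ)l. Suppose nmExt : {0,1}^n × {0,1}^{l+1} → {0,1}^m is a (k,ε)-non-malleable extractor. Define TExt : {0,1}^n × {0,1}^n → {0,1}^m by TExt(x,y) = nmExt(x, Scond(y)_1 ∘ 0) ⊕ nmExt(x, Scond(y)_2 ∘ 1), where ∘ denotes concatenation of one bit and ⊕ is bitwise XOR. Then for every (n,(1/2−δ)n)-source Y and every (n,k)-source X independent of Y, the distribution TExt(X,Y) is (ε' + 2^{(1/2−δ)l+1}·ε)-close to U_m. -/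

import Mathlib

open Finset
open scoped Classical

noncomputable section

abbrev BS (n : ℕ) := Fin n → Bool

def uniformD (α : Type*) [Fintype α] : α → ℝ := fun _ => (Fintype.card α : ℝ)⁻¹

def prodD {α β : Type*} (p : α → ℝ) (q : β → ℝ) : α × β → ℝ := fun z => p z.1 * q z.2

def pushD {α β : Type*} [Fintype α] (f : α → β) (p : α → ℝ) : β → ℝ :=
  fun b => ∑ a, if f a = b then p a else 0

def SD {α : Type*} [Fintype α] (p q : α → ℝ) : ℝ := (∑ a, |p a - q a|) / 2

def IsDist {α : Type*} [Fintype α] (p : α → ℝ) : Prop := (∀ a, 0 ≤ p a) ∧ ∑ a, p a = 1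

def mEntGe {α : Type*} (p : α → ℝ) (k : ℝ) : Prop := ∀ a, p a ≤ (2:ℝ) ^ (-k)

def IsNME {X Y M : Type*} [Fintype X] [Fintype Y] [Fintype M]
    (E : X → Y → M) (k ε : ℝ) : Prop :=
  ∀ μX : X → ℝ, IsDist μX → mEntGe μX k →
    ∀ A : Y → Y, (∀ y, A y ≠ y) →
      SD (pushD (fun xy : X × Y => (E xy.1 xy.2, E xy.1 (A xy.2), xy.2)) (prodD μX (uniformD Y)))
         (prodD (uniformD M)
           (pushD (fun xy : X × Y => (E xy.1 (A xy.2), xy.2)) (prodD μX (uniformD Y)))) ≤ ε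

def IsNMEr {X Y M : Type*} [Fintype X] [Fintype Y] [Fintype M]
    (r : ℕ) (E : X → Y → M) (k ε : ℝ) : Prop :=
  ∀ μX : X → ℝ, IsDist μX → mEntGe μX k →
    ∀ A : Fin r → Y → Y, (∀ i y, A i y ≠ y) →
      SD (pushD (fun xy : X × Y =>
            (E xy.1 xy.2, fun i => E xy.1 (A i xy.2), xy.2)) (prodD μX (uniformD Y)))
         (prodD (uniformD M)
           (pushD (fun xy : X × Y =>
             ((fun i => E xy.1 (A i xy.2)), xy.2)) (prodD μX (uniformD Y)))) ≤ ε

/-! Conditioned on the pair `z = Scond y`, the output is `E(X, z₁0) ⊕ E(X, z₂1)`. The two seeds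
differ, so non-malleability makes `E(X, z₁0)` close to uniform given `E(X, z₂1)`, and then so is
the XOR. If `z₁` has min-entropy `h`, the error averaged over `z` is at most `2^{-h}` times the
error summed over all `z₁` against a worst partner `f z₁`; that sum is at most `2^{l+1} ε` by
non-malleability against a fixed-point-free adversary sending `z₁0` to `(f z₁)1`. Convexity of
statistical distance handles the mixture, which is `ε'`-close to `Scond(Y)`. -/

section PushForward

variable {α β γ : Type*}

lemma sum_pushD [Fintype α] [Fintype β] (f : α → β) (p : α → ℝ) :
    ∑ b, pushD f p b = ∑ a, p a := by
  simp only [pushD]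
  rw [Finset.sum_comm]
  simp

lemma pushD_nonneg [Fintype α] (f : α → β) {p : α → ℝ} (hp : ∀ a, 0 ≤ p a) (b : β) :
    0 ≤ pushD f p b :=
  Finset.sum_nonneg fun a _ => by split <;> simp [hp a]

lemma IsDist.pushD [Fintype α] [Fintype β] (f : α → β) {p : α → ℝ} (hp : IsDist p) :
    IsDist (pushD f p) :=
  ⟨pushD_nonneg f hp.1, by rw [sum_pushD, hp.2]⟩

lemma pushD_comp [Fintype α] [Fintype β] (f : α → β) (g : β → γ) (p : α → ℝ) :
    pushD g (pushD f p) = pushD (g ∘ f) p := by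
  funext c
  simp only [pushD, Function.comp, Finset.ite_sum_zero]
  rw [Finset.sum_comm]
  refine Finset.sum_congr rfl fun a _ => ?_
  rw [Finset.sum_eq_single (f a)]
  · simp
  · intro b _ hb
    simp [Ne.symm hb]
  · simp

lemma pushD_fst_apply [Fintype α] [Fintype β] (p : α × β → ℝ) (a : α) :
    pushD Prod.fst p a = ∑ b, p (a, b) := by
  rw [pushD, Fintype.sum_prod_type, Finset.sum_comm]
  simp

lemma pushD_prodD_apply [Fintype α] [Fintype β] (f : α × β → γ) (μ : α → ℝ) (ν : β → ℝ)
    (c : γ) :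
    pushD f (prodD μ ν) c = ∑ b, ν b * pushD (fun a => f (a, b)) μ c := by
  simp only [pushD, prodD, Fintype.sum_prod_type, Finset.mul_sum]
  rw [Finset.sum_comm]
  refine Finset.sum_congr rfl fun b _ => Finset.sum_congr rfl fun a _ => ?_
  split <;> ring

lemma prodD_pushD_right [Fintype α] [Fintype γ] (μ : γ → ℝ) (f : α → β) (p : α → ℝ) :
    prodD μ (pushD f p) = pushD (Prod.map id f) (prodD μ p) := by
  funext z
  rw [pushD_prodD_apply, prodD, pushD, Finset.mul_sum]
  refine Finset.sum_congr rfl fun a _ => ?_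
  simp [pushD, Prod.ext_iff, ite_and, mul_comm]

lemma pushD_uniformD_of_bijective [Fintype α] {f : α → α} (hf : Function.Bijective f) :
    pushD f (uniformD α) = uniformD α := by
  funext w
  obtain ⟨u, rfl⟩ := hf.2 w
  rw [pushD, Finset.sum_eq_single u]
  · simp [uniformD]
  · intro a _ ha
    simp [hf.1.ne ha]
  · simp

lemma pushD_op_prodD_uniformD [Fintype α] {op : α → α → α}
    (hop : ∀ v, Function.Bijective (op · v)) {r : α → ℝ} (hr : ∑ v, r v = 1) :
    pushD (fun uv : α × α => op uv.1 uv.2) (prodD (uniformD α) r) = uniformD α := by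
  funext w
  simp only [pushD_prodD_apply, pushD_uniformD_of_bijective (hop _), ← Finset.sum_mul, hr,
    one_mul]

end PushForward

section StatisticalDistance

variable {α β : Type*}

lemma SD_nonneg [Fintype α] (p q : α → ℝ) : 0 ≤ SD p q := by
  unfold SD; positivity

lemma SD_triangle [Fintype α] (p q r : α → ℝ) : SD p r ≤ SD p q + SD q r := by
  simp only [SD, ← add_div, ← Finset.sum_add_distrib]
  gcongr with a
  exact abs_sub_le _ _ _

lemma SD_pushD_le [Fintype α] [Fintype β] (f : α → β) (p q : α → ℝ) :
    SD (pushD f p) (pushD f q) ≤ SD p q := by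
  have hpoint : ∀ b, |pushD f p b - pushD f q b| ≤ pushD f (fun a => |p a - q a|) b := by
    intro b
    calc |pushD f p b - pushD f q b| = |∑ a, if f a = b then p a - q a else 0| := by
          simp only [pushD, ← Finset.sum_sub_distrib, ite_sub_ite, sub_zero]
      _ ≤ ∑ a, |if f a = b then p a - q a else 0| := Finset.abs_sum_le_sum_abs _ _
      _ = pushD f (fun a => |p a - q a|) b := by simp only [pushD, apply_ite, abs_zero]
  unfold SD
  gcongr ?_ / 2
  exact (Finset.sum_le_sum fun b _ => hpoint b).trans_eq (sum_pushD _ _)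

lemma SD_prodD_left [Fintype α] [Fintype β] {μ : α → ℝ} (hμ : IsDist μ) (p q : β → ℝ) :
    SD (prodD μ p) (prodD μ q) = SD p q := by
  simp only [SD, prodD, Fintype.sum_prod_type, ← mul_sub, abs_mul, abs_of_nonneg (hμ.1 _),
    ← Finset.mul_sum, ← Finset.sum_mul, hμ.2, one_mul]

lemma SD_mix_le {ι : Type*} [Fintype α] [Fintype ι] {w : ι → ℝ} (hw : IsDist w)
    (P : ι → α → ℝ) (q : α → ℝ) :
    SD (fun a => ∑ i, w i * P i a) q ≤ ∑ i, w i * SD (P i) q := by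
  have hpoint : ∀ a, |∑ i, w i * P i a - q a| ≤ ∑ i, w i * |P i a - q a| := by
    intro a
    calc |∑ i, w i * P i a - q a| = |∑ i, w i * (P i a - q a)| := by
          simp only [mul_sub, Finset.sum_sub_distrib, ← Finset.sum_mul, hw.2, one_mul]
      _ ≤ ∑ i, |w i * (P i a - q a)| := Finset.abs_sum_le_sum_abs _ _
      _ = ∑ i, w i * |P i a - q a| := by simp only [abs_mul, abs_of_nonneg (hw.1 _)]
  simp only [SD, mul_div_assoc', ← Finset.sum_div, Finset.mul_sum]
  gcongr ?_ / 2
  rw [Finset.sum_comm]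
  exact Finset.sum_le_sum fun a _ => hpoint a

lemma SD_comp_equiv [Fintype α] [Fintype β] (e : α ≃ β) (p q : β → ℝ) :
    SD (p ∘ e) (q ∘ e) = SD p q := by
  simp only [SD, Function.comp, Equiv.sum_comp e fun b => |p b - q b|]

lemma SD_eq_sum_SD_section [Fintype α] [Fintype β] (p q : α × β → ℝ) :
    SD p q = ∑ a, SD (fun b => p (a, b)) (fun b => q (a, b)) := by
  simp only [SD, Fintype.sum_prod_type, Finset.sum_div]

lemma SD_const_mul [Fintype α] {c : ℝ} (hc : 0 ≤ c) (p q : α → ℝ) :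
    SD (fun a => c * p a) (fun a => c * q a) = c * SD p q := by
  simp only [SD, ← mul_sub, abs_mul, abs_of_nonneg hc, ← Finset.mul_sum, mul_div_assoc]

end StatisticalDistance

section NonMalleable

variable {X Y M : Type*} [Fintype X] [Fintype M]

def nmError (E : X → Y → M) (μ : X → ℝ) (s t : Y) : ℝ :=
  SD (pushD (fun x => (E x s, E x t)) μ) (prodD (uniformD M) (pushD (fun x => E x t) μ))

lemma nmError_nonneg (E : X → Y → M) (μ : X → ℝ) (s t : Y) : 0 ≤ nmError E μ s t :=
  SD_nonneg _ _

lemma IsNME.sum_nmError_le [Fintype Y] {E : X → Y → M} {k ε : ℝ} (hnm : IsNME E k ε)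
    {μ : X → ℝ} (hμ : IsDist μ) (hk : mEntGe μ k) {A : Y → Y} (hA : ∀ y, A y ≠ y) :
    ∑ y, nmError E μ y (A y) ≤ Fintype.card Y * ε := by
  have hjoint : ∀ u v s, pushD (fun xy : X × Y => (E xy.1 xy.2, E xy.1 (A xy.2), xy.2))
      (prodD μ (uniformD Y)) (u, v, s)
        = uniformD Y s * pushD (fun x => (E x s, E x (A s))) μ (u, v) := by
    intro u v s
    rw [pushD_prodD_apply, Finset.sum_eq_single s]
    · simp [pushD]
    · intro y _ hy
      simp [pushD, hy]
    · simp
  have hadv : ∀ v s, pushD (fun xy : X × Y => (E xy.1 (A xy.2), xy.2))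
      (prodD μ (uniformD Y)) (v, s) = uniformD Y s * pushD (fun x => E x (A s)) μ v := by
    intro v s
    rw [pushD_prodD_apply, Finset.sum_eq_single s]
    · simp [pushD]
    · intro y _ hy
      simp [pushD, hy]
    · simp
  -- reorder the outcome `(u, v, s)` as `(s, (u, v))` and split the distance along the seed `s`
  have h := hnm μ hμ hk A hA
  rw [← SD_comp_equiv ((Equiv.prodComm _ _).trans (Equiv.prodAssoc M M Y)),
    SD_eq_sum_SD_section] at h
  have hc : (0 : ℝ) ≤ (Fintype.card Y : ℝ)⁻¹ := by positivity
  replace h : ∑ y, (Fintype.card Y : ℝ)⁻¹ * nmError E μ y (A y) ≤ ε := by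
    refine le_of_eq_of_le (Finset.sum_congr rfl fun s _ => ?_) h
    rw [nmError, ← SD_const_mul hc]
    congr 1 <;> funext b
    · simp [hjoint, uniformD]
    · simp [prodD, hadv, uniformD]
      ring
  rw [← Finset.mul_sum] at h
  rcases isEmpty_or_nonempty Y with hY | hY
  · simp
  · rwa [← inv_mul_le_iff₀ (by positivity)]

lemma SD_pushD_op_le_nmError {Y : Type*} {op : M → M → M}
    (hop : ∀ v, Function.Bijective (op · v)) (E : X → Y → M) {μ : X → ℝ} (hμ : IsDist μ)
    (s t : Y) :
    SD (pushD (fun x => op (E x s) (E x t)) μ) (uniformD M) ≤ nmError E μ s t := by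
  have h := SD_pushD_le (fun uv : M × M => op uv.1 uv.2) (pushD (fun x => (E x s, E x t)) μ)
    (prodD (uniformD M) (pushD (fun x => E x t) μ))
  rwa [pushD_comp, pushD_op_prodD_uniformD hop (hμ.pushD (fun x => E x t)).2] at h

end NonMalleable

lemma sum_comp_le_sum_of_injective {ι κ : Type*} [Fintype ι] [Fintype κ] {g : ι → κ}
    (hg : Function.Injective g) {f : κ → ℝ} (hf : ∀ k, 0 ≤ f k) : ∑ i, f (g i) ≤ ∑ k, f k := by
  rw [← Finset.sum_image fun x _ y _ h => hg h]
  exact Finset.sum_le_univ_sum_of_nonneg hf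

lemma exists_sum_mul_le_of_mEntGe_fst {S T : Type*} [Fintype S] [Fintype T] [Nonempty T]
    {p : S × T → ℝ} (hp : ∀ z, 0 ≤ p z) {h : ℝ} (hph : mEntGe (pushD Prod.fst p) h)
    {Δ : S × T → ℝ} (hΔ : ∀ z, 0 ≤ Δ z) :
    ∃ f : S → T, ∑ z, p z * Δ z ≤ 2 ^ (-h) * ∑ s, Δ (s, f s) := by
  choose f hf using fun s => Finite.exists_max fun t => Δ (s, t)
  refine ⟨f, ?_⟩
  calc ∑ z, p z * Δ z = ∑ s, ∑ t, p (s, t) * Δ (s, t) := Fintype.sum_prod_type _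
    _ ≤ ∑ s, ∑ t, p (s, t) * Δ (s, f s) := by gcongr with s _ t _; exacts [hp _, hf s t]
    _ = ∑ s, pushD Prod.fst p s * Δ (s, f s) := by simp only [pushD_fst_apply, Finset.sum_mul]
    _ ≤ ∑ s, 2 ^ (-h) * Δ (s, f s) := by gcongr with s; exacts [hΔ _, hph s]
    _ = 2 ^ (-h) * ∑ s, Δ (s, f s) := Finset.mul_sum _ _ _ |>.symm

lemma exists_fixedPointFree_snoc {l : ℕ} (f : BS l → BS l) (b : Bool) :
    ∃ A : BS (l + 1) → BS (l + 1),
      (∀ s, A s ≠ s) ∧ ∀ y, A (Fin.snoc y b) = Fin.snoc (f y) (!b) := by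
  refine ⟨fun s => Fin.snoc (if s (Fin.last l) = b then f (Fin.init s) else Fin.init s)
    (!s (Fin.last l)), fun s hs => ?_, fun y => by simp⟩
  simpa using congrFun hs (Fin.last l)

section TaggedSeeds

variable {X M : Type*} [Fintype X] [Fintype M]

lemma SD_pushD_op_snoc_le {l : ℕ} {op : M → M → M} (hop : ∀ v, Function.Bijective (op · v))
    {E : X → BS (l + 1) → M} {k ε : ℝ} (hnm : IsNME E k ε) {μ : X → ℝ} (hμ : IsDist μ)
    (hk : mEntGe μ k) (b : Bool) {p : BS l × BS l → ℝ} (hp : IsDist p) {h : ℝ}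
    (hph : mEntGe (pushD Prod.fst p) h) :
    SD (pushD (fun xz : X × (BS l × BS l) =>
          op (E xz.1 (Fin.snoc xz.2.1 b)) (E xz.1 (Fin.snoc xz.2.2 (!b)))) (prodD μ p))
      (uniformD M) ≤ 2 ^ (-h) * (2 ^ (l + 1) * ε) := by
  set Δ : BS l × BS l → ℝ := fun z => nmError E μ (Fin.snoc z.1 b) (Fin.snoc z.2 (!b))
  obtain ⟨f, hf⟩ :=
    exists_sum_mul_le_of_mEntGe_fst hp.1 hph (Δ := Δ) fun _ => nmError_nonneg ..
  obtain ⟨A, hA, hAf⟩ := exists_fixedPointFree_snoc f b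
  have hseeds : ∑ y, Δ (y, f y) ≤ ∑ s, nmError E μ s (A s) := by
    simp only [Δ, ← hAf]
    exact sum_comp_le_sum_of_injective (f := fun s => nmError E μ s (A s))
      (Fin.snoc_left_injective (α := fun _ => Bool) b) fun _ => nmError_nonneg ..
  calc _ = SD (fun w => ∑ z, p z * pushD (fun x => op (E x (Fin.snoc z.1 b))
          (E x (Fin.snoc z.2 (!b)))) μ w) (uniformD M) := by
        congr 1; funext w; rw [pushD_prodD_apply]
    _ ≤ ∑ z, p z * SD (pushD (fun x => op (E x (Fin.snoc z.1 b))
          (E x (Fin.snoc z.2 (!b)))) μ) (uniformD M) := SD_mix_le hp _ _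
    _ ≤ ∑ z, p z * Δ z := by
        gcongr with z
        exacts [hp.1 z, SD_pushD_op_le_nmError hop E hμ _ _]
    _ ≤ 2 ^ (-h) * ∑ s, nmError E μ s (A s) := hf.trans (by gcongr)
    _ ≤ 2 ^ (-h) * (2 ^ (l + 1) * ε) := by
        gcongr
        simpa using hnm.sum_nmError_le hμ hk hA

lemma bijective_xor_right {m : ℕ} (v : BS m) :
    Function.Bijective fun u : BS m => fun i => xor (u i) (v i) :=
  Function.Involutive.bijective fun u => funext fun i => by simp

lemma SD_pushD_xor_snoc_le {m l : ℕ} {E : X → BS (l + 1) → BS m} {k ε : ℝ}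
    (hnm : IsNME E k ε) {μ : X → ℝ} (hμ : IsDist μ) (hk : mEntGe μ k) {p : BS l × BS l → ℝ}
    (hp : IsDist p) {h : ℝ} (hph : mEntGe (pushD Prod.fst p) h ∨ mEntGe (pushD Prod.snd p) h) :
    SD (pushD (fun xz : X × (BS l × BS l) => fun i =>
          xor (E xz.1 (Fin.snoc xz.2.1 false) i) (E xz.1 (Fin.snoc xz.2.2 true) i)) (prodD μ p))
      (uniformD (BS m)) ≤ 2 ^ (-h) * (2 ^ (l + 1) * ε) := by
  rcases hph with hfst | hsnd
  · exact SD_pushD_op_snoc_le bijective_xor_right hnm hμ hk false hp hfst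
  · have h := SD_pushD_op_snoc_le bijective_xor_right hnm hμ hk true (hp.pushD Prod.swap)
      (by rw [pushD_comp]; exact hsnd)
    rw [prodD_pushD_right, pushD_comp] at h
    convert h using 3
    funext xz i
    simp [Bool.xor_comm]

end TaggedSeeds

theorem stmt_7_general
    (n l m k : ℕ) (δ ε ε' : ℝ)
    (Scond : BS n → BS l × BS l)
    (hScond : ∀ μY : BS n → ℝ, IsDist μY → mEntGe μY ((1/2 - δ) * n) →
      ∃ (t : ℕ) (w : Fin t → ℝ) (D : Fin t → (BS l × BS l → ℝ)),
        (∀ i, 0 ≤ w i) ∧ (∑ i, w i = 1) ∧ (∀ i, IsDist (D i)) ∧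
        (∀ i, mEntGe (pushD Prod.fst (D i)) ((1/2 + δ) * l) ∨
              mEntGe (pushD Prod.snd (D i)) ((1/2 + δ) * l)) ∧
        SD (pushD Scond μY) (fun z => ∑ i, w i * D i z) ≤ ε')
    (nmExt : BS n → BS (l + 1) → BS m)
    (hnm : IsNME nmExt (k:ℝ) ε) :
    ∀ (μX μY : BS n → ℝ),
      IsDist μX → mEntGe μX (k:ℝ) → IsDist μY → mEntGe μY ((1/2 - δ) * n) →
      SD (pushD (fun xy : BS n × BS n => fun i : Fin m =>
            xor (nmExt xy.1 (Fin.snoc (Scond xy.2).1 false) i)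
                (nmExt xy.1 (Fin.snoc (Scond xy.2).2 true) i))
           (prodD μX μY))
         (uniformD (BS m))
        ≤ ε' + (2:ℝ) ^ ((1/2 - δ) * l + 1) * ε := by
  intro μX μY hX hXk hY hYk
  obtain ⟨t, w, D, hw0, hw1, hD, hDent, hclose⟩ := hScond μY hY hYk
  set g : BS n × (BS l × BS l) → BS m := fun xz i =>
    xor (nmExt xz.1 (Fin.snoc xz.2.1 false) i) (nmExt xz.1 (Fin.snoc xz.2.2 true) i)
  set mix : BS l × BS l → ℝ := fun z => ∑ i, w i * D i z
  have hmix : pushD g (prodD μX mix) = fun c => ∑ i, w i * pushD g (prodD μX (D i)) c := by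
    funext c
    simp only [mix, pushD_prodD_apply, Finset.sum_mul, Finset.mul_sum, mul_assoc]
    exact Finset.sum_comm
  have hbound :
      (2:ℝ) ^ (-((1/2 + δ) * l)) * (2 ^ (l + 1) * ε) = 2 ^ ((1/2 - δ) * l + 1) * ε := by
    rw [← mul_assoc, ← Real.rpow_natCast, ← Real.rpow_add two_pos]
    push_cast
    ring_nf
  calc _ = SD (pushD g (prodD μX (pushD Scond μY))) (uniformD (BS m)) := by
        rw [prodD_pushD_right, pushD_comp]; rfl
    _ ≤ SD (pushD g (prodD μX (pushD Scond μY))) (pushD g (prodD μX mix))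
          + SD (pushD g (prodD μX mix)) (uniformD (BS m)) := SD_triangle _ _ _
    _ ≤ ε' + ∑ i, w i * SD (pushD g (prodD μX (D i))) (uniformD (BS m)) := by
        gcongr
        · exact (SD_pushD_le _ _ _).trans ((SD_prodD_left hX _ _).trans_le hclose)
        · exact hmix ▸ SD_mix_le ⟨hw0, hw1⟩ _ _
    _ ≤ ε' + ∑ i, w i * (2 ^ (-((1/2 + δ) * l)) * (2 ^ (l + 1) * ε)) := by
        gcongr with i
        exacts [hw0 i, SD_pushD_xor_snoc_le hnm hX hXk (hD i) (hDent i)]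
    _ = ε' + 2 ^ ((1/2 - δ) * l + 1) * ε := by rw [← Finset.sum_mul, hw1, one_mul, hbound]

theorem stmt_7
    (n l m k : ℕ) (δ ε ε' : ℝ) (hδ : 0 < δ)
    (hε0 : 0 < ε) (hε1 : ε < 1) (hε'0 : 0 < ε') (hε'1 : ε' < 1)
    (Scond : BS n → BS l × BS l)
    (hScond : ∀ μY : BS n → ℝ, IsDist μY → mEntGe μY ((1/2 - δ) * n) →
      ∃ (t : ℕ) (w : Fin t → ℝ) (D : Fin t → (BS l × BS l → ℝ)),
        (∀ i, 0 ≤ w i) ∧ (∑ i, w i = 1) ∧ (∀ i, IsDist (D i)) ∧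
        (∀ i, mEntGe (pushD Prod.fst (D i)) ((1/2 + δ) * l) ∨
              mEntGe (pushD Prod.snd (D i)) ((1/2 + δ) * l)) ∧
        SD (pushD Scond μY) (fun z => ∑ i, w i * D i z) ≤ ε')
    (nmExt : BS n → BS (l + 1) → BS m)
    (hnm : IsNME nmExt (k:ℝ) ε) :
    ∀ (μX μY : BS n → ℝ),
      IsDist μX → mEntGe μX (k:ℝ) → IsDist μY → mEntGe μY ((1/2 - δ) * n) →
      SD (pushD (fun xy : BS n × BS n => fun i : Fin m =>
            xor (nmExt xy.1 (Fin.snoc (Scond xy.2).1 false) i)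
                (nmExt xy.1 (Fin.snoc (Scond xy.2).2 true) i))
           (prodD μX μY))
         (uniformD (BS m))
        ≤ ε' + (2:ℝ) ^ ((1/2 - δ) * l + 1) * ε :=
  stmt_7_general n l m k δ ε ε' Scond hScond nmExt hnm
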